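/- arXiv:2304.09445 — 2 statements merged into one kernel-verified Lean document; each statement's English description precedes it below -/
import Mathlib

section
/- Let H = ([t], E) be a hypergraph and J ⊆ [t] an inclusion-minimal subset with |J| ≥ 2 satisfying ∑_{e∈E} max(|e∩J|−1, 0) ≥ (|J|−1)k, assuming such a subset exists. Then the restricted hypergraph H_J = (J, (e∩J)_{e∈E}) is k-weakly-partition-connected. -/
open Finset

/-- If `J ⊆ [t]` with `|J| ≥ 2` is inclusion-minimal satisfying
`∑ₑ max(|e∩J|−1,0) ≥ (|J|−1)k`, then the restricted hypergraph `(J, (e∩J)ₑ)`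
is `k`-weakly-partition-connected. -/
theorem stmt2 {t n k : ℕ} (e : Fin n → Finset (Fin t)) (J : Finset (Fin t))
    (hJ : 2 ≤ J.card)
    (hsum : (J.card - 1) * k ≤ ∑ i, ((e i ∩ J).card - 1))
    (hmin : ∀ J' : Finset (Fin t), J' ⊂ J → 2 ≤ J'.card →
      ∑ i, ((e i ∩ J').card - 1) < (J'.card - 1) * k) :
    ∀ P : Finpartition J,
      k * (P.parts.card - 1) ≤
        ∑ i, ((P.parts.filter fun p => ((e i ∩ J) ∩ p).Nonempty).card - 1) := by
  intro P
  rcases lt_or_ge P.parts.card 2 with h1 | h2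
  · have h0 : P.parts.card - 1 = 0 := by omega
    simp [h0]
  -- Fiberwise decomposition of each e i ∩ J along the parts
  have hA : ∀ i, (e i ∩ J).card = ∑ p ∈ P.parts, ((e i ∩ J) ∩ p).card := by
    intro i
    rw [← Finset.card_biUnion (s := P.parts) (t := fun p => (e i ∩ J) ∩ p)
      (fun p hp q hq hpq =>
      (P.disjoint hp hq hpq).mono inter_subset_right inter_subset_right)]
    congr 1
    ext x
    simp only [Finset.mem_biUnion, Finset.mem_inter]
    constructor
    · rintro ⟨hxe, hxJ⟩
      obtain ⟨p, hp, hxp⟩ := P.exists_mem hxJ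
      exact ⟨p, hp, ⟨hxe, hxJ⟩, hxp⟩
    · rintro ⟨p, hp, ⟨hxe, hxJ⟩, _⟩
      exact ⟨hxe, hxJ⟩
  -- per-edge identity
  have hB : ∀ i, (e i ∩ J).card - 1
      = (∑ p ∈ P.parts, (((e i ∩ J) ∩ p).card - 1))
        + ((P.parts.filter fun p => ((e i ∩ J) ∩ p).Nonempty).card - 1) := by
    intro i
    set F := P.parts.filter fun p => ((e i ∩ J) ∩ p).Nonempty with hF
    have hsub : F ⊆ P.parts := Finset.filter_subset _ _
    have hcard0 : ∀ p ∈ P.parts, p ∉ F → ((e i ∩ J) ∩ p).card = 0 := by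
      intro p hp hpF
      rw [Finset.card_eq_zero, ← Finset.not_nonempty_iff_eq_empty]
      intro hne
      exact hpF (Finset.mem_filter.mpr ⟨hp, hne⟩)
    have h1 : ∑ p ∈ P.parts, ((e i ∩ J) ∩ p).card = ∑ p ∈ F, ((e i ∩ J) ∩ p).card :=
      (Finset.sum_subset hsub (fun p hp hpF => hcard0 p hp hpF)).symm
    have h1' : ∑ p ∈ P.parts, (((e i ∩ J) ∩ p).card - 1)
        = ∑ p ∈ F, (((e i ∩ J) ∩ p).card - 1) :=
      (Finset.sum_subset hsub (fun p hp hpF => by rw [hcard0 p hp hpF]; rfl)).symm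
    have h2 : ∑ p ∈ F, ((e i ∩ J) ∩ p).card
        = (∑ p ∈ F, (((e i ∩ J) ∩ p).card - 1)) + F.card := by
      have hterm : ∀ p ∈ F, ((e i ∩ J) ∩ p).card = (((e i ∩ J) ∩ p).card - 1) + 1 := by
        intro p hp
        have : 0 < ((e i ∩ J) ∩ p).card :=
          Finset.card_pos.mpr (Finset.mem_filter.mp hp).2
        omega
      rw [Finset.sum_congr rfl hterm, Finset.sum_add_distrib, Finset.sum_const,
        smul_eq_mul, mul_one]
    have ha : (e i ∩ J).card = (∑ p ∈ F, (((e i ∩ J) ∩ p).card - 1)) + F.card := by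
      rw [hA i, h1, h2]
    have hm0 : F.card = 0 → (e i ∩ J).card = 0 := by
      intro h
      rw [hA i, h1]
      rw [Finset.card_eq_zero] at h
      simp [h]
    rw [h1']
    omega
  -- sum it over edges
  have hEq : ∑ i, ((e i ∩ J).card - 1)
      = (∑ i, ∑ p ∈ P.parts, (((e i ∩ J) ∩ p).card - 1))
        + ∑ i, ((P.parts.filter fun p => ((e i ∩ J) ∩ p).Nonempty).card - 1) := by
    rw [Finset.sum_congr rfl (fun i _ => hB i), Finset.sum_add_distrib]
  -- bound the inner sums using minimality
  have hC : ∀ p ∈ P.parts, (∑ i, (((e i ∩ J) ∩ p).card - 1)) ≤ (p.card - 1) * k := by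
    intro p hp
    have hpJ : p ⊆ J := P.le hp
    have hrw : ∀ i, (e i ∩ J) ∩ p = e i ∩ p := by
      intro i
      rw [inter_assoc, Finset.inter_eq_right.mpr hpJ]
    simp only [hrw]
    rcases lt_or_ge p.card 2 with hc | hc
    · have : ∀ i, (e i ∩ p).card - 1 = 0 := by
        intro i
        have : (e i ∩ p).card ≤ p.card := Finset.card_le_card inter_subset_right
        omega
      simp [this]
    · have hne : p ≠ J := by
        intro h
        obtain ⟨q, hq, hqp⟩ := Finset.exists_mem_ne h2 p
        have hqne : q.Nonempty := P.nonempty_of_mem_parts hq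
        have hdisj : Disjoint q p := P.disjoint hq hp hqp
        have hqJ : q ⊆ J := P.le hq
        rw [← h] at hqJ
        obtain ⟨x, hx⟩ := hqne
        exact (Finset.disjoint_left.mp hdisj hx (hqJ hx))
      exact le_of_lt (hmin p (ssubset_of_subset_of_ne hpJ hne) hc)
  -- total bound on the double sum
  have hparts_le : P.parts.card ≤ J.card := by
    calc P.parts.card = ∑ _p ∈ P.parts, 1 := by simp
      _ ≤ ∑ p ∈ P.parts, p.card := Finset.sum_le_sum (fun p hp =>
          Finset.card_pos.mpr (P.nonempty_of_mem_parts hp))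
      _ = J.card := P.sum_card_parts
  have hsumparts : (∑ p ∈ P.parts, (p.card - 1)) + P.parts.card = J.card := by
    have hterm : ∀ p ∈ P.parts, p.card = (p.card - 1) + 1 := by
      intro p hp
      have : 0 < p.card := Finset.card_pos.mpr (P.nonempty_of_mem_parts hp)
      omega
    calc (∑ p ∈ P.parts, (p.card - 1)) + P.parts.card
        = ∑ p ∈ P.parts, ((p.card - 1) + 1) := by
          rw [Finset.sum_add_distrib, Finset.sum_const, smul_eq_mul, mul_one]
      _ = ∑ p ∈ P.parts, p.card := (Finset.sum_congr rfl (fun p hp => (hterm p hp).symm))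
      _ = J.card := P.sum_card_parts
  have hSp : (∑ i, ∑ p ∈ P.parts, (((e i ∩ J) ∩ p).card - 1))
      ≤ (J.card - P.parts.card) * k := by
    rw [Finset.sum_comm]
    calc ∑ p ∈ P.parts, ∑ i, (((e i ∩ J) ∩ p).card - 1)
        ≤ ∑ p ∈ P.parts, (p.card - 1) * k := Finset.sum_le_sum hC
      _ = (∑ p ∈ P.parts, (p.card - 1)) * k := by rw [Finset.sum_mul]
      _ = (J.card - P.parts.card) * k := by
          congr 1
          omega
  -- finish
  set Sp := ∑ i, ∑ p ∈ P.parts, (((e i ∩ J) ∩ p).card - 1) with hSpdef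
  set M := ∑ i, ((P.parts.filter fun p => ((e i ∩ J) ∩ p).Nonempty).card - 1) with hMdef
  have hfin : (P.parts.card - 1) * k + Sp ≤ Sp + M := by
    calc (P.parts.card - 1) * k + Sp
        ≤ (P.parts.card - 1) * k + (J.card - P.parts.card) * k := by
          exact Nat.add_le_add_left hSp _
      _ = (J.card - 1) * k := by
          rw [← Nat.add_mul]
          congr 1
          omega
      _ ≤ ∑ i, ((e i ∩ J).card - 1) := hsum
      _ = Sp + M := hEq
  rw [mul_comm]
  rw [add_comm Sp M] at hfin
  exact Nat.le_of_add_le_add_right hfin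
end

section
/- Let H = ([t], (e_1,…,e_n)) be a hypergraph with an orientation (each hyperedge assigned a head vertex) and a root vertex v ∈ [t] such that every other vertex u has k edge-disjoint directed paths to v. Define δ_j = indeg(j) for j ≠ v and δ_v = indeg(v) − k, and assume δ_v ≥ 0 and ∑_j δ_j = n − k. Set S_j = {i ∈ [n] : j ∉ e_i}. Then the multiset consisting of δ_j copies of S_j for each j ∈ [t] is an (n, n−k)-generic-zero-pattern; that is, for every nonempty multiset K over [t] in which each j appears at most δ_j times, |⋂_{j∈K} S_j| ≤ n − k − |K| (counting K with multiplicity). -/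
open Finset

/-- A directed path in a directed hypergraph (edges `e`, head assignment `head`),
given as the list of its edges: `IsPath e head u v es` means the path starts at `u`,
ends at `v`, and at each step the current vertex is a tail (member but not head)
of the next edge, moving to that edge's head. -/
def IsPath {t n : ℕ} (e : Fin n → Finset (Fin t)) (head : Fin n → Fin t) :
    Fin t → Fin t → List (Fin n) → Prop
  | u, v, [] => u = v
  | u, v, i :: rest => u ∈ e i ∧ u ≠ head i ∧ IsPath e head (head i) v rest

/-!
With `S` the support of `K`, `⋂_{j ∈ K} Sⱼ` is the set of edges disjoint from `S`, so it suffices to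
find `|K| + k` edges meeting `S`. The edges with head in `S` number `∑_{j ∈ S} indeg j ≥ |K|`, with `k`
to spare when `v ∈ S` because `δᵥ = indeg v − k`. When `v ∉ S`, each of the `k` edge-disjoint paths
from a vertex of `S` to `v` leaves `S` through an edge whose head is outside `S`, which supplies the
`k` missing edges.
-/

section

variable {t n : ℕ} (e : Fin n → Finset (Fin t)) (head : Fin n → Fin t)

def outCut (P : Fin t → Prop) [DecidablePred P] : Finset (Fin n) :=
  univ.filter fun i => (∃ w ∈ e i, P w) ∧ ¬ P (head i)

variable {e head}

theorem IsPath.exists_mem_outCut (P : Fin t → Prop) :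
    ∀ {u v : Fin t} {es : List (Fin n)}, IsPath e head u v es → P u → ¬ P v →
      ∃ i ∈ es, (∃ w ∈ e i, P w) ∧ ¬ P (head i)
  | _, _, [], rfl, hu, hv => absurd hu hv
  | u, _, i :: _, ⟨hui, _, hrest⟩, hu, hv => by
    by_cases hP : P (head i)
    · obtain ⟨j, hj, hjP⟩ := IsPath.exists_mem_outCut P hrest hP hv
      exact ⟨j, List.mem_cons_of_mem _ hj, hjP⟩
    · exact ⟨i, List.mem_cons_self, ⟨u, hui, hu⟩, hP⟩

theorem le_card_outCut {P : Fin t → Prop} [DecidablePred P] {u v : Fin t} (hu : P u) (hv : ¬ P v)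
    {k : ℕ} (paths : Fin k → List (Fin n)) (hpath : ∀ a, IsPath e head u v (paths a))
    (hdisj : ∀ a b, a ≠ b → ∀ i, i ∈ paths a → i ∉ paths b) :
    k ≤ #(outCut e head P) := by
  choose f hf_mem hf_out using fun a => (hpath a).exists_mem_outCut P hu hv
  have hf_inj : Function.Injective f := fun a b hab => by
    by_contra hne
    exact hdisj a b hne (f a) (hf_mem a) (hab ▸ hf_mem b)
  simpa using card_le_card_of_injOn (s := univ) (t := outCut e head P) f
    (fun a _ => by simpa [outCut] using hf_out a) hf_inj.injOn

theorem card_filter_head_eq_sum (P : Fin t → Prop) [DecidablePred P] :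
    #(univ.filter fun i => P (head i)) = ∑ j ∈ univ.filter P, #(univ.filter fun i => head i = j) := by
  rw [sum_card_fiberwise_eq_card_filter]
  simp

theorem sum_add_ite_le_card_filter_head {P : Fin t → Prop} [DecidablePred P] {v : Fin t} {k : ℕ}
    {m : Fin t → ℕ} (hm : ∀ j, m j + (if j = v then k else 0) ≤ #(univ.filter fun i => head i = j)) :
    ∑ j ∈ univ.filter P, m j + (if P v then k else 0) ≤ #(univ.filter fun i => P (head i)) := by
  rw [card_filter_head_eq_sum]
  calc ∑ j ∈ univ.filter P, m j + (if P v then k else 0)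
      = ∑ j ∈ univ.filter P, (m j + if j = v then k else 0) := by
        rw [sum_add_distrib, sum_ite_eq']
        simp
    _ ≤ _ := sum_le_sum fun j _ => hm j

theorem card_avoiding_add_card_head_add_card_outCut (hhead : ∀ i, head i ∈ e i)
    (P : Fin t → Prop) [DecidablePred P] :
    #(univ.filter fun i => ∀ j, P j → j ∉ e i) + #(univ.filter fun i => P (head i))
      + #(outCut e head P) = n := by
  have h_avoid := card_filter_add_card_filter_not (s := univ) (fun i => ∀ j, P j → j ∉ e i)
  have h_meet := card_filter_add_card_filter_not
    (s := univ.filter fun i => ¬ ∀ j, P j → j ∉ e i) (fun i => P (head i))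
  rw [filter_filter, filter_filter] at h_meet
  have h_head : (univ.filter fun i => (¬ ∀ j, P j → j ∉ e i) ∧ P (head i))
      = univ.filter fun i => P (head i) :=
    filter_congr fun i _ => ⟨And.right, fun h => ⟨fun h' => h' _ h (hhead i), h⟩⟩
  have h_out : (univ.filter fun i => (¬ ∀ j, P j → j ∉ e i) ∧ ¬ P (head i))
      = outCut e head P :=
    filter_congr fun i _ => by simp only [not_forall, not_not, exists_prop, and_comm (a := _ ∈ e i)]
  rw [h_head, h_out] at h_meet
  simp only [card_univ, Fintype.card_fin] at h_avoid
  omega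

end

theorem stmt6_general {t n k : ℕ} (e : Fin n → Finset (Fin t)) (head : Fin n → Fin t)
    (hhead : ∀ i, head i ∈ e i) (v : Fin t) (δ : Fin t → ℕ)
    (hδ : ∀ j, j ≠ v → δ j = (univ.filter fun i => head i = j).card)
    (hδv : δ v + k = (univ.filter fun i => head i = v).card)
    (hpaths : ∀ u, u ≠ v → ∃ paths : Fin k → List (Fin n),
      (∀ a, IsPath e head u v (paths a)) ∧
      (∀ a b, a ≠ b → ∀ i, i ∈ paths a → i ∉ paths b))
    (m : Fin t → ℕ) (hm : ∀ j, m j ≤ δ j) (hm0 : 0 < ∑ j, m j) :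
    (((univ.filter fun i => ∀ j, 0 < m j → j ∉ e i).card : ℤ))
      ≤ (n : ℤ) - k - ∑ j, (m j : ℤ) := by
  have hindeg : ∀ j, m j + (if j = v then k else 0) ≤ #(univ.filter fun i => head i = j) := by
    intro j
    split_ifs with hjv
    · subst hjv
      have := hm j
      omega
    · exact hδ j hjv ▸ hm j
  have h_head := sum_add_ite_le_card_filter_head (P := fun j => 0 < m j) hindeg
  rw [sum_filter_of_ne fun j _ hj => Nat.pos_of_ne_zero hj] at h_head
  have h_out : (if 0 < m v then 0 else k) ≤ #(outCut e head fun j => 0 < m j) := by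
    split_ifs with hv
    · exact Nat.zero_le _
    obtain ⟨u, -, hu⟩ := exists_ne_zero_of_sum_ne_zero hm0.ne'
    obtain ⟨paths, hpath, hdisj⟩ := hpaths u (by rintro rfl; exact hv (Nat.pos_of_ne_zero hu))
    exact le_card_outCut (Nat.pos_of_ne_zero hu) hv paths hpath hdisj
  have h_part := card_avoiding_add_card_head_add_card_outCut hhead fun j => 0 < m j
  rw [← Nat.cast_sum]
  split_ifs at h_head h_out <;> omega

/-- Given an orientation of `H = ([t],(e₁,…,eₙ))` with root `v` such
that every other vertex has `k` edge-disjoint directed paths to `v`, and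
`δⱼ = indeg(j)` for `j ≠ v`, `δᵥ = indeg(v) − k ≥ 0`, `∑ δⱼ = n − k`, the multiset
of `δⱼ` copies of `Sⱼ = {i : j ∉ eᵢ}` is an `(n, n−k)`-generic-zero-pattern: for any
nonempty multiset `K` (given by multiplicities `m j ≤ δ j`),
`|⋂_{j ∈ supp K} Sⱼ| ≤ n − k − |K|`. -/
theorem stmt6 {t n k : ℕ} (e : Fin n → Finset (Fin t)) (head : Fin n → Fin t)
    (hhead : ∀ i, head i ∈ e i) (v : Fin t) (δ : Fin t → ℕ)
    (hδ : ∀ j, j ≠ v → δ j = (univ.filter fun i => head i = j).card)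
    (hδv : δ v + k = (univ.filter fun i => head i = v).card)
    (hsum : (∑ j, δ j) + k = n)
    (hpaths : ∀ u, u ≠ v → ∃ paths : Fin k → List (Fin n),
      (∀ a, IsPath e head u v (paths a)) ∧
      (∀ a b, a ≠ b → ∀ i, i ∈ paths a → i ∉ paths b))
    (m : Fin t → ℕ) (hm : ∀ j, m j ≤ δ j) (hm0 : 0 < ∑ j, m j) :
    (((univ.filter fun i => ∀ j, 0 < m j → j ∉ e i).card : ℤ))
      ≤ (n : ℤ) - k - ∑ j, (m j : ℤ) :=
  stmt6_general e head hhead v δ hδ hδv hpaths m hm hm0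
end
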